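/- Assume the Main Assumption and additionally Φ″(1) > 0. Let W : ℝ → ℝ be a nondecreasing solution of W = 𝒜Φ′(𝒜W) with W_sh − W ∈ L²(ℝ), W(φ) → −1 as φ → −∞ and W(φ) → +1 as φ → +∞, and let τ₊ be the unique positive solution of τ² = 2Φ″(1)(cosh τ − 1). Then for all τ̲, τ̄ with 0 < τ̲ < τ₊ < τ̄ there exist constants c̲ > 0 and c̄ > 0 such that c̲ exp(−τ̄ φ) ≤ 1 − W(φ) ≤ c̄ exp(−τ̲ φ) for all φ ≥ 0. -/

import Mathlib

open MeasureTheory Filter Topology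

/-- The averaging operator `(𝒜U)(φ) = ∫_{φ-1/2}^{φ+1/2} U(s) ds`. -/
noncomputable def avg (U : ℝ → ℝ) (φ : ℝ) : ℝ := ∫ s in (φ - 1/2)..(φ + 1/2), U s

/-- The shock profile connecting `-1` to `1`. -/
noncomputable def Wsh : ℝ → ℝ := fun φ => if 0 ≤ φ then 1 else -1



lemma avg_mono_on {f g : ℝ → ℝ} {φ : ℝ} (hf : IntervalIntegrable f volume (φ - 1/2) (φ + 1/2))
    (hg : IntervalIntegrable g volume (φ - 1/2) (φ + 1/2))
    (h : ∀ s ∈ Set.Icc (φ - 1/2) (φ + 1/2), f s ≤ g s) :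
    avg f φ ≤ avg g φ :=
  intervalIntegral.integral_mono_on (by linarith) hf hg h

lemma avg_const (c : ℝ) (φ : ℝ) : avg (fun _ => c) φ = c := by
  simp [avg]; ring

lemma avg_sub {f g : ℝ → ℝ} (hf : ∀ a b, IntervalIntegrable f volume a b)
    (hg : ∀ a b, IntervalIntegrable g volume a b) (φ : ℝ) :
    avg (fun s => f s - g s) φ = avg f φ - avg g φ :=
  intervalIntegral.integral_sub (hf _ _) (hg _ _)

lemma avg_add {f g : ℝ → ℝ} (hf : ∀ a b, IntervalIntegrable f volume a b)
    (hg : ∀ a b, IntervalIntegrable g volume a b) (φ : ℝ) :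
    avg (fun s => f s + g s) φ = avg f φ + avg g φ :=
  intervalIntegral.integral_add (hf _ _) (hg _ _)

lemma avg_const_mul (c : ℝ) (f : ℝ → ℝ) (φ : ℝ) :
    avg (fun s => c * f s) φ = c * avg f φ :=
  intervalIntegral.integral_const_mul c f

lemma avg_mono {f g : ℝ → ℝ} (hf : ∀ a b, IntervalIntegrable f volume a b)
    (hg : ∀ a b, IntervalIntegrable g volume a b) (h : ∀ s, f s ≤ g s) (φ : ℝ) :
    avg f φ ≤ avg g φ :=
  avg_mono_on (hf _ _) (hg _ _) (fun s _ => h s)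

lemma avg_continuous {f : ℝ → ℝ} (hf : ∀ a b, IntervalIntegrable f volume a b) :
    Continuous (avg f) := by
  have hp : Continuous fun b => ∫ x in (0:ℝ)..b, f x := intervalIntegral.continuous_primitive hf 0
  have he : avg f = fun φ => (∫ x in (0:ℝ)..(φ + 1/2), f x) - ∫ x in (0:ℝ)..(φ - 1/2), f x := by
    funext φ
    have := intervalIntegral.integral_add_adjacent_intervals (hf 0 (φ - 1/2)) (hf (φ - 1/2) (φ + 1/2))
    unfold avg; linarith
  rw [he]
  exact ((hp.comp (continuous_id.add continuous_const)).sub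
    (hp.comp (continuous_id.sub continuous_const)))

lemma monotone_avg_bounds {W : ℝ → ℝ} (hW : Monotone W) (φ : ℝ) :
    W (φ - 1/2) ≤ avg W φ ∧ avg W φ ≤ W (φ + 1/2) := by
  constructor
  · have h := avg_mono_on (f := fun _ => W (φ - 1/2)) (g := W)
      intervalIntegrable_const hW.intervalIntegrable (fun s hs => hW hs.1)
    rwa [avg_const] at h
  · have h := avg_mono_on (f := W) (g := fun _ => W (φ + 1/2))
      hW.intervalIntegrable intervalIntegrable_const (fun s hs => hW hs.2)
    rwa [avg_const] at h

noncomputable def bet (τ : ℝ) : ℝ := (Real.exp (τ/2) - Real.exp (-(τ/2))) / τ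
noncomputable def gam (τ : ℝ) : ℝ := (bet τ - (Real.exp (τ/2) + Real.exp (-(τ/2)))/2) / τ

lemma avg_exp {a : ℝ} (ha : a ≠ 0) (φ : ℝ) :
    avg (fun s => Real.exp (a*s)) φ = ((Real.exp (a/2) - Real.exp (-(a/2)))/a) * Real.exp (a*φ) := by
  have hder : ∀ x ∈ Set.uIcc (φ - 1/2) (φ + 1/2),
      HasDerivAt (fun s => Real.exp (a*s)/a) (Real.exp (a*x)) x := by
    intro x _
    have h1 : HasDerivAt (fun s : ℝ => a*s) a x := by simpa using (hasDerivAt_id x).const_mul a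
    have := ((Real.hasDerivAt_exp (a*x)).comp x h1).div_const a
    simpa [mul_comm, mul_div_assoc, mul_div_cancel_left₀ _ ha] using this
  have hint : IntervalIntegrable (fun s => Real.exp (a*s)) volume (φ - 1/2) (φ + 1/2) :=
    (Real.continuous_exp.comp (continuous_const.mul continuous_id)).intervalIntegrable _ _
  have := intervalIntegral.integral_eq_sub_of_hasDerivAt hder hint
  unfold avg
  rw [this]
  have e1 : a * (φ + 1/2) = a*φ + a/2 := by ring
  have e2 : a * (φ - 1/2) = a*φ + -(a/2) := by ring
  rw [e1, e2, Real.exp_add, Real.exp_add]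
  field_simp

lemma avg_exp_neg {τ : ℝ} (hτ : 0 < τ) (φ : ℝ) :
    avg (fun s => Real.exp (-(τ*s))) φ = bet τ * Real.exp (-(τ*φ)) := by
  have h := avg_exp (a := -τ) (by linarith) φ
  have e : ∀ s:ℝ, -τ * s = -(τ*s) := fun s => by ring
  simp only [e] at h
  rw [h]
  unfold bet
  have hτ' : τ ≠ 0 := ne_of_gt hτ
  rw [show -τ/2 = -(τ/2) by ring, show (-(-(τ/2))) = τ/2 by ring]
  rw [div_mul_eq_mul_div, div_mul_eq_mul_div, div_eq_div_iff (by linarith) hτ']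
  ring

lemma avg_exp_pos {τ : ℝ} (hτ : 0 < τ) (φ : ℝ) :
    avg (fun s => Real.exp (τ*s)) φ = bet τ * Real.exp (τ*φ) := by
  have h := avg_exp (a := τ) (by linarith) φ
  rw [h]; rfl

lemma avg_id_exp {τ : ℝ} (hτ : 0 < τ) (φ : ℝ) :
    avg (fun s => s * Real.exp (-(τ*s))) φ
      = bet τ * (φ * Real.exp (-(τ*φ))) + gam τ * Real.exp (-(τ*φ)) := by
  have hτ' : τ ≠ 0 := ne_of_gt hτ
  have hder : ∀ x ∈ Set.uIcc (φ - 1/2) (φ + 1/2),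
      HasDerivAt (fun s => -(s/τ + 1/τ^2) * Real.exp (-(τ*s))) (x * Real.exp (-(τ*x))) x := by
    intro x _
    have h1 : HasDerivAt (fun s : ℝ => -(s/τ + 1/τ^2)) (-(1/τ)) x := by
      have h0 : HasDerivAt (fun s : ℝ => s/τ + 1/τ^2) (1/τ) x := by
        have := ((hasDerivAt_id x).div_const τ).add_const (1/τ^2)
        simpa [one_div] using this
      exact h0.neg
    have h2 : HasDerivAt (fun s : ℝ => Real.exp (-(τ*s))) (-τ * Real.exp (-(τ*x))) x := by
      have hl : HasDerivAt (fun s : ℝ => -(τ*s)) (-τ) x := by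
        have := ((hasDerivAt_id' x).const_mul τ).neg; rwa [mul_one] at this
      convert hl.exp using 1; ring
    have := h1.mul h2
    rw [show x * Real.exp (-(τ*x)) = -(1/τ) * Real.exp (-(τ*x)) + -(x/τ + 1/τ^2) * (-τ * Real.exp (-(τ*x))) by field_simp; ring]
    exact this
  have hint : IntervalIntegrable (fun s => s * Real.exp (-(τ*s))) volume (φ - 1/2) (φ + 1/2) := by
    apply Continuous.intervalIntegrable
    continuity
  have := intervalIntegral.integral_eq_sub_of_hasDerivAt hder hint
  unfold avg
  rw [this]
  have e1 : -(τ * (φ + 1/2)) = -(τ*φ) + -(τ/2) := by ring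
  have e2 : -(τ * (φ - 1/2)) = -(τ*φ) + τ/2 := by ring
  rw [e1, e2, Real.exp_add, Real.exp_add]
  unfold gam bet
  field_simp
  ring

lemma sinh_lt_mul_cosh {x : ℝ} (hx : 0 < x) : Real.sinh x < x * Real.cosh x := by
  have hmono : StrictMonoOn (fun t => t * Real.cosh t - Real.sinh t) (Set.Ici (0:ℝ)) := by
    apply strictMonoOn_of_deriv_pos (convex_Ici 0)
    · apply Continuous.continuousOn; continuity
    · intro t ht
      rw [interior_Ici] at ht
      have hd : HasDerivAt (fun t => t * Real.cosh t - Real.sinh t) (t * Real.sinh t) t := by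
        have h1 : HasDerivAt (fun t : ℝ => t * Real.cosh t) (Real.cosh t + t * Real.sinh t) t := by
          have := (hasDerivAt_id' t).mul (Real.hasDerivAt_cosh t); rwa [one_mul] at this
        have := h1.sub (Real.hasDerivAt_sinh t)
        rwa [add_sub_cancel_left] at this
      rw [hd.deriv]
      exact mul_pos ht (Real.sinh_pos_iff.2 ht)
  have := hmono (Set.self_mem_Ici) (Set.mem_Ici.mpr (le_of_lt hx)) hx
  simpa using this

lemma bet_eq (τ : ℝ) : bet τ = Real.sinh (τ/2) / (τ/2) := by
  unfold bet
  rw [Real.sinh_eq]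
  field_simp

lemma bet_pos {τ : ℝ} (hτ : 0 < τ) : 0 < bet τ := by
  rw [bet_eq]
  exact div_pos (Real.sinh_pos_iff.2 (by linarith)) (by linarith)

lemma bet_strict_mono {a b : ℝ} (ha : 0 < a) (hab : a < b) : bet a < bet b := by
  have hmono : StrictMonoOn (fun x => Real.sinh x / x) (Set.Ioi (0:ℝ)) := by
    apply strictMonoOn_of_deriv_pos (convex_Ioi 0)
    · apply ContinuousOn.div Real.continuous_sinh.continuousOn continuousOn_id
      intro x hx; exact ne_of_gt hx
    · intro x hx
      rw [interior_Ioi] at hx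
      have hx' : (x:ℝ) ≠ 0 := ne_of_gt hx
      have hd : HasDerivAt (fun x => Real.sinh x / x) ((Real.cosh x * x - Real.sinh x * 1)/x^2) x :=
        (Real.hasDerivAt_sinh x).div (hasDerivAt_id x) hx'
      rw [hd.deriv]
      apply div_pos
      · have := sinh_lt_mul_cosh hx
        nlinarith [this]
      · positivity
  rw [bet_eq, bet_eq]
  exact hmono (by simpa using ha) (by simp; linarith) (by linarith)

lemma gam_neg {τ : ℝ} (hτ : 0 < τ) : gam τ < 0 := by
  unfold gam
  apply div_neg_of_neg_of_pos _ hτ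
  rw [sub_neg, bet_eq]
  have h2 : (Real.exp (τ/2) + Real.exp (-(τ/2)))/2 = Real.cosh (τ/2) := by
    rw [Real.cosh_eq]
  rw [h2]
  rw [div_lt_iff₀ (by linarith)]
  have := sinh_lt_mul_cosh (x := τ/2) (by linarith)
  linarith


lemma cont_exp_neg (τ : ℝ) : Continuous (fun s : ℝ => Real.exp (-(τ*s))) :=
  Real.continuous_exp.comp ((continuous_const.mul continuous_id).neg)

lemma cont_exp_pos (τ : ℝ) : Continuous (fun s : ℝ => Real.exp (τ*s)) :=
  Real.continuous_exp.comp (continuous_const.mul continuous_id)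

lemma avg_linear_comb {Z : ℝ → ℝ} {τ C D : ℝ} (hτ : 0 < τ)
    (hZ : Z = fun φ => C * Real.exp (-(τ*φ)) + D * Real.exp (τ*φ)) (φ : ℝ) :
    avg Z φ = bet τ * Z φ := by
  subst hZ
  have h1 : (∀ a b, IntervalIntegrable (fun s => C * Real.exp (-(τ*s))) volume a b) :=
    fun a b => (continuous_const.mul (cont_exp_neg τ)).intervalIntegrable a b
  have h2 : (∀ a b, IntervalIntegrable (fun s => D * Real.exp (τ*s)) volume a b) :=
    fun a b => (continuous_const.mul (cont_exp_pos τ)).intervalIntegrable a b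
  rw [show avg (fun φ => C * Real.exp (-(τ*φ)) + D * Real.exp (τ*φ)) φ
      = avg (fun s => C * Real.exp (-(τ*s))) φ + avg (fun s => D * Real.exp (τ*s)) φ from
    avg_add h1 h2 φ]
  rw [avg_const_mul, avg_const_mul, avg_exp_neg hτ, avg_exp_pos hτ]
  ring

lemma upper_comparison {V : ℝ → ℝ} (hVcont : Continuous V)
    (hV0 : ∀ φ, 0 ≤ V φ) (hV2 : ∀ φ, V φ ≤ 2)
    {κ θ τ R : ℝ} (hκ : 0 < κ) (hτ : 0 < τ) (hθ : θ < 1)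
    (hbet : κ * bet τ ^ 2 ≤ θ)
    (hrel : ∀ φ, R ≤ φ → V φ ≤ κ * avg (avg V) φ) :
    ∀ φ₀, R ≤ φ₀ → V φ₀ ≤ 2 * Real.exp (τ * R) * Real.exp (-(τ * φ₀)) := by
  intro φ₀ hφ₀
  set C := 2 * Real.exp (τ * R) with hC
  apply le_of_forall_pos_le_add
  intro ε hε
  set ε' := ε / Real.exp (τ * φ₀) with hε'def
  have hε'pos : 0 < ε' := div_pos hε (Real.exp_pos _)
  set Z : ℝ → ℝ := fun φ => C * Real.exp (-(τ*φ)) + ε' * Real.exp (τ*φ) with hZdef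
  have hZpos : ∀ φ, 0 < Z φ := by
    intro φ
    have := Real.exp_pos (-(τ*φ)); have := Real.exp_pos (τ*φ)
    have hCpos : 0 < C := by rw [hC]; positivity
    simp only [hZdef]; nlinarith
  have hZcont : Continuous Z :=
    (continuous_const.mul (cont_exp_neg τ)).add (continuous_const.mul (cont_exp_pos τ))
  set T : ℝ := max (max φ₀ R) (Real.log (2/ε')/τ + 1) with hT
  have hT1 : φ₀ ≤ T := le_trans (le_max_left _ _) (le_max_left _ _)
  have hT2 : R ≤ T := le_trans (le_max_right _ _) (le_max_left _ _)
  have hZtail : ∀ φ, T - 1 ≤ φ → 2 ≤ ε' * Real.exp (τ*φ) := by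
    intro φ hφ
    have h1 : Real.log (2/ε')/τ ≤ φ := by
      have := le_max_right (max φ₀ R) (Real.log (2/ε')/τ + 1)
      linarith
    have h2 : Real.log (2/ε') ≤ τ * φ := by
      rw [div_le_iff₀ hτ] at h1; linarith
    have h3 : 2/ε' ≤ Real.exp (τ*φ) := by
      calc 2/ε' = Real.exp (Real.log (2/ε')) := (Real.exp_log (by positivity)).symm
        _ ≤ Real.exp (τ*φ) := Real.exp_le_exp.2 h2
    rw [div_le_iff₀ hε'pos] at h3
    linarith [h3]
  have hZleft : ∀ φ, φ ≤ R → V φ ≤ Z φ := by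
    intro φ hφ
    have h1 : (1:ℝ) ≤ Real.exp (τ*R) * Real.exp (-(τ*φ)) := by
      rw [← Real.exp_add]
      have h0 : 0 ≤ τ*R + -(τ*φ) := by nlinarith
      calc (1:ℝ) = Real.exp 0 := by simp
        _ ≤ _ := Real.exp_le_exp.2 h0
    have h2 : (2:ℝ) ≤ C * Real.exp (-(τ*φ)) := by rw [hC]; nlinarith
    have h3 : 0 < ε' * Real.exp (τ*φ) := by positivity
    have := hV2 φ
    simp only [hZdef]; linarith
  have hKne : (Set.Icc R T).Nonempty := Set.nonempty_Icc.2 hT2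
  obtain ⟨φs, hφsmem, hφsmax⟩ := (isCompact_Icc).exists_isMaxOn hKne
    (Continuous.continuousOn (hVcont.div hZcont (fun x => ne_of_gt (hZpos x))))
  set M := V φs / Z φs with hM
  have hZε : Z φ₀ = C * Real.exp (-(τ*φ₀)) + ε := by
    simp only [hZdef, hε'def]
    rw [div_mul_cancel₀ _ (ne_of_gt (Real.exp_pos _))]
  by_cases hM1 : M ≤ 1
  · have hq : V φ₀ / Z φ₀ ≤ M := hφsmax ⟨hφ₀, hT1⟩
    have hVZ : V φ₀ ≤ Z φ₀ := by
      rw [← div_le_one (hZpos φ₀)]; linarith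
    rw [hZε] at hVZ; linarith
  · push_neg at hM1
    exfalso
    have hMglob : ∀ φ, V φ ≤ M * Z φ := by
      intro φ
      rcases le_total φ R with h | h
      · have := hZleft φ h
        nlinarith [hZpos φ]
      · rcases le_total φ T with h' | h'
        · have hq : V φ / Z φ ≤ M := hφsmax ⟨h, h'⟩
          rw [div_le_iff₀ (hZpos φ)] at hq; linarith
        · have h2 : 2 ≤ ε' * Real.exp (τ*φ) := hZtail φ (by linarith)
          have h3 : V φ ≤ Z φ := by
            have h4 : 0 < C * Real.exp (-(τ*φ)) := by rw [hC]; positivity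
            have := hV2 φ
            simp only [hZdef]; linarith
          nlinarith [hZpos φ]
    have hVint : ∀ a b, IntervalIntegrable V volume a b := fun a b => hVcont.intervalIntegrable a b
    have hMZcont : Continuous (fun φ => M * Z φ) := continuous_const.mul hZcont
    have hAV1 : ∀ φ, avg V φ ≤ M * avg Z φ := by
      intro φ
      have := avg_mono hVint (fun a b => hMZcont.intervalIntegrable a b) hMglob φ
      rwa [avg_const_mul] at this
    have hAZ : ∀ φ, avg Z φ = bet τ * Z φ := avg_linear_comb hτ hZdef
    have hAVcont : Continuous (avg V) := avg_continuous hVint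
    have hbetZcont : Continuous (fun φ => M * (bet τ * Z φ)) :=
      continuous_const.mul (continuous_const.mul hZcont)
    have hAV2 : avg (avg V) φs ≤ M * (bet τ * (bet τ * Z φs)) := by
      have hpt : ∀ s, avg V s ≤ M * (bet τ * Z s) := by
        intro s; rw [← hAZ s]; exact hAV1 s
      have hstep := avg_mono (fun a b => hAVcont.intervalIntegrable a b)
        (fun a b => hbetZcont.intervalIntegrable a b) hpt φs
      calc avg (avg V) φs ≤ avg (fun φ => M * (bet τ * Z φ)) φs := hstep
        _ = M * (bet τ * avg Z φs) := by rw [avg_const_mul, avg_const_mul]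
        _ = M * (bet τ * (bet τ * Z φs)) := by rw [hAZ]
    have hVφs : V φs = M * Z φs := by
      rw [hM, div_mul_cancel₀ _ (ne_of_gt (hZpos φs))]
    have hrelφs := hrel φs hφsmem.1
    have hfinal : M * Z φs ≤ θ * (M * Z φs) := by
      calc M * Z φs = V φs := hVφs.symm
        _ ≤ κ * avg (avg V) φs := hrelφs
        _ ≤ κ * (M * (bet τ * (bet τ * Z φs))) :=
            mul_le_mul_of_nonneg_left hAV2 (le_of_lt hκ)
        _ = (κ * bet τ ^2) * (M * Z φs) := by ring
        _ ≤ θ * (M * Z φs) := by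
            apply mul_le_mul_of_nonneg_right hbet
            have := hZpos φs
            positivity
    have hMZ : 0 < M * Z φs := mul_pos (by linarith) (hZpos φs)
    nlinarith [hMZ]


set_option maxHeartbeats 1000000 in
lemma lower_comparison {V : ℝ → ℝ} (hVcont : Continuous V) (hV0 : ∀ φ, 0 ≤ V φ)
    (hVanti : Antitone V) {κ τ R : ℝ} (hκ0 : 0 < κ) (hκ1 : κ < 1) (hτ : 0 < τ)
    (hbet : 1 ≤ κ * bet τ ^ 2)
    (hrel : ∀ φ, R ≤ φ → κ * avg (avg V) φ ≤ V φ) :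
    ∀ φ₀, R + 1 ≤ φ₀ →
      V R * Real.exp (τ*(R-1)) / (φ₀ - R + 2) * Real.exp (-(τ*φ₀)) ≤ V φ₀ := by
  intro φ₀ hφ₀
  set B := φ₀ + 1 with hB
  have hBR : 0 < B - R + 1 := by simp only [hB]; linarith
  set w : ℝ → ℝ := fun φ => (B - φ) * Real.exp (-(τ*φ)) with hw
  set c := V R * Real.exp (τ*(R-1)) / (B - R + 1) with hc
  have hc0 : 0 ≤ c := by
    rw [hc]
    have := hV0 R
    positivity
  have hwcont : Continuous w := (continuous_const.sub continuous_id).mul (cont_exp_neg τ)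
  have hgoalc : V R * Real.exp (τ*(R-1)) / (φ₀ - R + 2) * Real.exp (-(τ*φ₀)) = c * w φ₀ := by
    simp only [hc, hw, hB]
    rw [show φ₀ + 1 - φ₀ = 1 by ring, show φ₀ + 1 - R + 1 = φ₀ - R + 2 by ring]
    ring
  have hwle : ∀ φ, R - 1 ≤ φ → φ ≤ R → c * w φ ≤ V R := by
    intro φ h1 h2
    have hwb : w φ ≤ (B - R + 1) * Real.exp (τ*(1-R)) := by
      show (B - φ) * Real.exp (-(τ*φ)) ≤ (B - R + 1) * Real.exp (τ*(1-R))
      have e1 : Real.exp (-(τ*φ)) ≤ Real.exp (τ*(1-R)) := by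
        apply Real.exp_le_exp.2; nlinarith
      have e2 : B - φ ≤ B - R + 1 := by linarith
      exact mul_le_mul e2 e1 (le_of_lt (Real.exp_pos _)) (by linarith)
    calc c * w φ ≤ c * ((B - R + 1) * Real.exp (τ*(1-R))) := by
          apply mul_le_mul_of_nonneg_left hwb hc0
      _ = V R * (Real.exp (τ*(R-1)) * Real.exp (τ*(1-R))) := by
          rw [hc]; field_simp
      _ = V R := by
          rw [← Real.exp_add, show τ*(R-1) + τ*(1-R) = 0 by ring, Real.exp_zero, mul_one]
  set F : ℝ → ℝ := fun φ => V φ - c * w φ with hF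
  have hFcont : Continuous F := hVcont.sub (continuous_const.mul hwcont)
  have hKne : (Set.Icc R (B+1)).Nonempty := Set.nonempty_Icc.2 (by simp only [hB]; linarith)
  obtain ⟨φs, hφsmem, hφsmin⟩ := isCompact_Icc.exists_isMinOn hKne hFcont.continuousOn
  by_cases hd : 0 ≤ F φs
  · have hfx : F φs ≤ F φ₀ := hφsmin ⟨by linarith, by simp only [hB]; linarith⟩
    have hfx0 : 0 ≤ F φ₀ := le_trans hd hfx
    rw [hgoalc]
    simp only [hF] at hfx0
    linarith
  · push_neg at hd
    exfalso
    set d := - F φs with hdz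
    have hdpos : 0 < d := by rw [hdz]; linarith
    have hVφs : V φs = c * w φs - d := by
      have : F φs = V φs - c * w φs := by simp only [hF]
      rw [hdz, this]; ring
    have hcwpos : 0 < c * w φs := by
      have h0 := hV0 φs
      have : F φs = V φs - c * w φs := by simp only [hF]
      rw [this] at hd
      linarith
    have hwφs : 0 < w φs := by
      rcases lt_or_ge 0 (w φs) with h | h
      · exact h
      · exfalso; nlinarith
    have hφsB : φs ≤ B := by
      by_contra hcon
      push_neg at hcon
      have hneg : w φs < 0 := by
        have : (B - φs) * Real.exp (-(τ*φs)) < 0 :=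
          mul_neg_of_neg_of_pos (by linarith) (Real.exp_pos _)
        exact this
      linarith
    have hglob : ∀ φ ∈ Set.Icc (R-1) (B+1), c * w φ - d ≤ V φ := by
      intro φ hφ
      rcases le_total φ R with h | h
      · have h4 := hwle φ hφ.1 h
        have hVR : V R ≤ V φ := hVanti h
        linarith
      · have h5 : F φs ≤ F φ := hφsmin (⟨h, hφ.2⟩ : φ ∈ Set.Icc R (B+1))
        have e5 : F φs = V φs - c * w φs := by simp only [hF]
        have e6 : F φ = V φ - c * w φ := by simp only [hF]
        rw [e5, e6] at h5
        linarith
    have hwint : ∀ a b, IntervalIntegrable w volume a b := fun a b => hwcont.intervalIntegrable a b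
    have hBeint : ∀ a b, IntervalIntegrable (fun u : ℝ => B * Real.exp (-(τ*u))) volume a b :=
      fun a b => (continuous_const.mul (cont_exp_neg τ)).intervalIntegrable a b
    have hideint : ∀ a b, IntervalIntegrable (fun u : ℝ => u * Real.exp (-(τ*u))) volume a b :=
      fun a b => (continuous_id.mul (cont_exp_neg τ)).intervalIntegrable a b
    have haw : ∀ s, avg w s = bet τ * w s - gam τ * Real.exp (-(τ*s)) := by
      intro s
      have h1 : avg w s = avg (fun u => B * Real.exp (-(τ*u)) - u * Real.exp (-(τ*u))) s := by
        apply intervalIntegral.integral_congr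
        intro x _
        show (B - x) * Real.exp (-(τ*x)) = _
        ring
      rw [h1, avg_sub (f := fun u : ℝ => B * Real.exp (-(τ*u)))
          (g := fun u : ℝ => u * Real.exp (-(τ*u))) hBeint hideint,
        avg_const_mul, avg_exp_neg hτ, avg_id_exp hτ]
      show _ = bet τ * ((B - s) * Real.exp (-(τ*s))) - gam τ * Real.exp (-(τ*s))
      ring
    set G : ℝ → ℝ := fun s => c * (bet τ * w s - gam τ * Real.exp (-(τ*s))) - d with hG
    have hGcont : Continuous G := by
      apply Continuous.sub _ continuous_const
      exact continuous_const.mul ((continuous_const.mul hwcont).sub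
        (continuous_const.mul (cont_exp_neg τ)))
    have hcwint : ∀ a b, IntervalIntegrable (fun u => c * w u - d) volume a b :=
      fun a b => ((continuous_const.mul hwcont).sub continuous_const).intervalIntegrable a b
    have hacw : ∀ s, avg (fun u => c * w u - d) s = G s := by
      intro s
      rw [avg_sub (f := fun u => c * w u) (g := fun _ : ℝ => d)
        (fun a b => (continuous_const.mul hwcont).intervalIntegrable a b)
        (fun a b => intervalIntegrable_const), avg_const_mul, avg_const, haw, hG]
    have hstep1 : ∀ s ∈ Set.Icc (φs - 1/2) (φs + 1/2), G s ≤ avg V s := by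
      intro s hs
      rw [← hacw s]
      apply avg_mono_on (hcwint _ _) (hVcont.intervalIntegrable _ _)
      intro u hu
      apply hglob
      simp only [Set.mem_Icc] at hs hu ⊢
      have hR : R ≤ φs := hφsmem.1
      constructor
      · linarith [hs.1, hu.1]
      · linarith [hs.2, hu.2]
    have hstep2 : avg G φs ≤ avg (avg V) φs := by
      apply avg_mono_on (hGcont.intervalIntegrable _ _)
        ((avg_continuous (fun a b => hVcont.intervalIntegrable a b)).intervalIntegrable _ _)
      exact hstep1
    have hGint : ∀ a b, IntervalIntegrable G volume a b :=
      fun a b => hGcont.intervalIntegrable a b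
    have havgG : avg G φs
        = c * (bet τ ^2 * w φs - 2 * bet τ * gam τ * Real.exp (-(τ*φs))) - d := by
      have hf1 : ∀ a b, IntervalIntegrable
          (fun s => c * (bet τ * w s - gam τ * Real.exp (-(τ*s)))) volume a b :=
        fun a b => (continuous_const.mul ((continuous_const.mul hwcont).sub
          (continuous_const.mul (cont_exp_neg τ)))).intervalIntegrable a b
      have h1 : avg G φs = c * avg (fun s => bet τ * w s - gam τ * Real.exp (-(τ*s))) φs - d := by
        rw [hG]
        rw [avg_sub (f := fun s => c * (bet τ * w s - gam τ * Real.exp (-(τ*s))))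
          (g := fun _ : ℝ => d) hf1 (fun a b => intervalIntegrable_const), avg_const,
          avg_const_mul]
      have h2 : avg (fun s => bet τ * w s - gam τ * Real.exp (-(τ*s))) φs
          = bet τ * avg w φs - gam τ * avg (fun s => Real.exp (-(τ*s))) φs := by
        rw [avg_sub (f := fun s => bet τ * w s) (g := fun s => gam τ * Real.exp (-(τ*s)))
          (fun a b => (continuous_const.mul hwcont).intervalIntegrable a b)
          (fun a b => (continuous_const.mul (cont_exp_neg τ)).intervalIntegrable a b),
          avg_const_mul, avg_const_mul]
      rw [h1, h2, haw, avg_exp_neg hτ]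
      ring
    -- final contradiction
    have h2 := hrel φs hφsmem.1
    have h3 : κ * avg G φs ≤ V φs := le_trans (mul_le_mul_of_nonneg_left hstep2 (le_of_lt hκ0)) h2
    rw [havgG, hVφs] at h3
    have h7 : (1:ℝ) * (c * w φs) ≤ (κ * bet τ^2) * (c * w φs) :=
      mul_le_mul_of_nonneg_right hbet (le_of_lt hcwpos)
    have hterm1 : c * w φs ≤ κ * (c * (bet τ^2 * w φs)) := by nlinarith [h7]
    have hbp := bet_pos hτ
    have hgn := gam_neg hτ
    have hep := Real.exp_pos (-(τ*φs))
    have h6 : 0 < (-(gam τ)) * bet τ * Real.exp (-(τ*φs)) :=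
      mul_pos (mul_pos (by linarith) hbp) hep
    have hterm2 : κ * (c * (2 * bet τ * gam τ * Real.exp (-(τ*φs)))) ≤ 0 := by
      have h8 : 2 * bet τ * gam τ * Real.exp (-(τ*φs)) ≤ 0 := by nlinarith
      have h9 : 0 ≤ κ * c := mul_nonneg (le_of_lt hκ0) hc0
      nlinarith
    have hexp : κ * (c * (bet τ ^2 * w φs - 2 * bet τ * gam τ * Real.exp (-(τ*φs))) - d)
        = κ * (c * (bet τ^2 * w φs)) - κ * (c * (2 * bet τ * gam τ * Real.exp (-(τ*φs)))) - κ * d := by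
      ring
    rw [hexp] at h3
    -- from h3, hterm1, hterm2 : c*w φs - κ*d ≤ c*w φs - d  ⇒ d ≤ κ d
    have hfin : d ≤ κ * d := by linarith
    nlinarith


lemma ftc_phi {Φ : ℝ → ℝ} (hd2 : ∀ x, HasDerivAt (deriv Φ) (deriv (deriv Φ) x) x)
    (hcont2 : Continuous (deriv (deriv Φ))) (a b : ℝ) :
    ∫ u in a..b, deriv (deriv Φ) u = deriv Φ b - deriv Φ a :=
  intervalIntegral.integral_eq_sub_of_hasDerivAt (fun x _ => hd2 x)
    (hcont2.intervalIntegrable _ _)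

lemma deriv_bounds {Φ : ℝ → ℝ} (hd2 : ∀ x, HasDerivAt (deriv Φ) (deriv (deriv Φ) x) x)
    (hcont2 : Continuous (deriv (deriv Φ))) (hN2 : deriv Φ 1 = 1)
    {κl κu δ : ℝ}
    (hbnd : ∀ u ∈ Set.Icc (1-δ) 1, κl ≤ deriv (deriv Φ) u ∧ deriv (deriv Φ) u ≤ κu) :
    ∀ v, 1 - δ ≤ v → v ≤ 1 →
      κl * (1-v) ≤ 1 - deriv Φ v ∧ 1 - deriv Φ v ≤ κu * (1-v) := by
  intro v h1 h2
  have hftc : 1 - deriv Φ v = ∫ u in v..1, deriv (deriv Φ) u := by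
    rw [ftc_phi hd2 hcont2 v 1, hN2]
  have hsub : ∀ u ∈ Set.Icc v 1, u ∈ Set.Icc (1-δ) 1 := by
    intro u hu; exact ⟨by linarith [hu.1], hu.2⟩
  constructor
  · have hlo : ∫ u in v..(1:ℝ), κl ≤ ∫ u in v..(1:ℝ), deriv (deriv Φ) u := by
      apply intervalIntegral.integral_mono_on h2 intervalIntegrable_const
        (hcont2.intervalIntegrable _ _)
      exact fun u hu => (hbnd u (hsub u hu)).1
    rw [intervalIntegral.integral_const, smul_eq_mul] at hlo
    rw [hftc]; linarith [hlo]
  · have hhi : ∫ u in v..(1:ℝ), deriv (deriv Φ) u ≤ ∫ u in v..(1:ℝ), κu := by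
      apply intervalIntegral.integral_mono_on h2 (hcont2.intervalIntegrable _ _)
        intervalIntegrable_const
      exact fun u hu => (hbnd u (hsub u hu)).2
    rw [intervalIntegral.integral_const, smul_eq_mul] at hhi
    rw [hftc]; linarith [hhi]

lemma deriv_le_one {Φ : ℝ → ℝ} (hd2 : ∀ x, HasDerivAt (deriv Φ) (deriv (deriv Φ) x) x)
    (hcont2 : Continuous (deriv (deriv Φ))) (hN2 : deriv Φ 1 = 1)
    (hC : ∀ w ∈ Set.Icc (-1 : ℝ) 1, 0 ≤ deriv (deriv Φ) w) :
    ∀ v, -1 ≤ v → v ≤ 1 → deriv Φ v ≤ 1 := by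
  intro v h1 h2
  have hftc : 1 - deriv Φ v = ∫ u in v..1, deriv (deriv Φ) u := by
    rw [ftc_phi hd2 hcont2 v 1, hN2]
  have hnn : 0 ≤ ∫ u in v..(1:ℝ), deriv (deriv Φ) u := by
    apply intervalIntegral.integral_nonneg h2
    intro u hu
    exact hC u ⟨by linarith [hu.1], hu.2⟩
  linarith [hftc ▸ hnn]

set_option maxHeartbeats 1000000 in
lemma W_lt_one {Φ W : ℝ → ℝ}
    (hd2 : ∀ x, HasDerivAt (deriv Φ) (deriv (deriv Φ) x) x)
    (hcont2 : Continuous (deriv (deriv Φ))) (hN2 : deriv Φ 1 = 1)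
    (hC : ∀ w ∈ Set.Icc (-1 : ℝ) 1, 0 ≤ deriv (deriv Φ) w)
    (hpos : 0 < deriv (deriv Φ) 1)
    (hWmono : Monotone W)
    (hWeq : ∀ φ, W φ = avg (fun s => deriv Φ (avg W s)) φ)
    (hWbot : Tendsto W atBot (𝓝 (-1 : ℝ)))
    (hWle1 : ∀ φ, W φ ≤ 1) (hWge : ∀ φ, -1 ≤ W φ)
    (hWcont : Continuous W)
    (hAWb : ∀ s, -1 ≤ avg W s ∧ avg W s ≤ 1)
    (hAWcont : Continuous (avg W)) :
    ∀ φ, W φ < 1 := by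
  by_contra hcon
  push_neg at hcon
  obtain ⟨φ₀, hφ₀⟩ := hcon
  have hWint : ∀ a b, IntervalIntegrable W volume a b := fun a b => hWmono.intervalIntegrable
  set g : ℝ → ℝ := fun s => deriv Φ (avg W s) with hg
  have hgcont : Continuous g := by
    have hd1cont : Continuous (deriv Φ) := by
      have : ∀ x, ContinuousAt (deriv Φ) x := fun x => (hd2 x).continuousAt
      exact continuous_iff_continuousAt.2 this
    exact hd1cont.comp hAWcont
  have hgle1 : ∀ s, g s ≤ 1 := fun s =>
    deriv_le_one hd2 hcont2 hN2 hC (avg W s) (hAWb s).1 (hAWb s).2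
  have hgint : ∀ a b, IntervalIntegrable g volume a b := fun a b => hgcont.intervalIntegrable a b
  -- the set where W = 1
  set S : Set ℝ := {φ | W φ = 1} with hS
  have hSne : S.Nonempty := ⟨φ₀, le_antisymm (hWle1 φ₀) hφ₀⟩
  have hSclosed : IsClosed S := by
    have : S = W ⁻¹' {1} := by ext x; simp [hS]
    rw [this]
    exact IsClosed.preimage hWcont isClosed_singleton
  have hSbdd : BddBelow S := by
    by_contra hnb
    have hall : ∀ x, 1 ≤ W x := by
      intro x
      obtain ⟨y, hyS, hyx⟩ := not_bddBelow_iff.1 hnb x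
      calc (1:ℝ) = W y := hyS.symm
        _ ≤ W x := hWmono (le_of_lt hyx)
    have : (1:ℝ) ≤ -1 := ge_of_tendsto hWbot (Filter.Eventually.of_forall hall)
    linarith
  set φ₁ := sInf S with hφ₁def
  have hφ₁S : φ₁ ∈ S := hSclosed.csInf_mem hSne hSbdd
  have hWφ₁ : W φ₁ = 1 := hφ₁S
  have hlt : ∀ φ, φ < φ₁ → W φ < 1 := by
    intro φ hφ
    rcases lt_or_ge (W φ) 1 with h | h
    · exact h
    · exfalso
      have : φ ∈ S := le_antisymm (hWle1 φ) h
      have := csInf_le hSbdd this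
      linarith
  -- avg W φ₁ < 1
  have hw₁lt : avg W φ₁ < 1 := by
    have ha : W (φ₁ - 1/4) < 1 := hlt _ (by linarith)
    have hsplit : avg W φ₁ = (∫ s in (φ₁ - 1/2)..(φ₁ - 1/4), W s)
        + ∫ s in (φ₁ - 1/4)..(φ₁ + 1/2), W s :=
      (intervalIntegral.integral_add_adjacent_intervals (hWint _ _) (hWint _ _)).symm
    have hb1 : (∫ s in (φ₁ - 1/2)..(φ₁ - 1/4), W s) ≤ (1/4) * W (φ₁ - 1/4) := by
      have := intervalIntegral.integral_mono_on (by linarith : φ₁ - 1/2 ≤ φ₁ - 1/4)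
        (hWint _ _) intervalIntegrable_const
        (fun x hx => hWmono hx.2)
      rw [intervalIntegral.integral_const, smul_eq_mul] at this
      calc (∫ s in (φ₁ - 1/2)..(φ₁ - 1/4), W s) ≤ (φ₁ - 1/4 - (φ₁ - 1/2)) * W (φ₁ - 1/4) := this
        _ = (1/4) * W (φ₁ - 1/4) := by ring_nf
    have hb2 : (∫ s in (φ₁ - 1/4)..(φ₁ + 1/2), W s) ≤ 3/4 := by
      have := intervalIntegral.integral_mono_on (by linarith : φ₁ - 1/4 ≤ φ₁ + 1/2)
        (hWint _ _) intervalIntegrable_const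
        (fun x _ => hWle1 x)
      rw [intervalIntegral.integral_const, smul_eq_mul] at this
      calc (∫ s in (φ₁ - 1/4)..(φ₁ + 1/2), W s) ≤ (φ₁ + 1/2 - (φ₁ - 1/4)) * 1 := this
        _ = 3/4 := by ring_nf
    rw [hsplit]
    linarith
  have hw₁ge : -1 ≤ avg W φ₁ := (hAWb φ₁).1
  -- deriv Φ (avg W φ₁) < 1
  have hgφ₁ : g φ₁ < 1 := by
    rcases lt_or_ge (g φ₁) 1 with h | h
    · exact h
    · exfalso
      have heq1 : deriv Φ (avg W φ₁) = 1 := le_antisymm (hgle1 φ₁) h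
      set w₁ := avg W φ₁ with hw₁def
      have hconstd : ∀ u, w₁ ≤ u → u ≤ 1 → deriv Φ u = 1 := by
        intro u hu1 hu2
        have hge : deriv Φ w₁ ≤ deriv Φ u := by
          have h5 : ∫ x in w₁..u, deriv (deriv Φ) x = deriv Φ u - deriv Φ w₁ :=
            ftc_phi hd2 hcont2 w₁ u
          have h6 : 0 ≤ ∫ x in w₁..u, deriv (deriv Φ) x := by
            apply intervalIntegral.integral_nonneg hu1
            intro x hx
            exact hC x ⟨by linarith [hx.1], by linarith [hx.2]⟩
          linarith [h5 ▸ h6]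
        have hle : deriv Φ u ≤ 1 := deriv_le_one hd2 hcont2 hN2 hC u (by linarith) hu2
        rw [heq1] at hge
        linarith
      have hD2zero : ∀ x ∈ Set.Ioo w₁ 1, deriv (deriv Φ) x = 0 := by
        intro x hx
        have hmem : Set.Ioo w₁ 1 ∈ 𝓝 x := isOpen_Ioo.mem_nhds hx
        have heq : deriv Φ =ᶠ[𝓝 x] (fun _ => (1:ℝ)) := by
          filter_upwards [hmem] with u hu
          exact hconstd u hu.1.le hu.2.le
        have := heq.deriv_eq
        rw [deriv_const] at this
        exact this
      have hmemIio : Set.Ioo w₁ 1 ∈ 𝓝[<] (1:ℝ) := by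
        apply Ioo_mem_nhdsLT_of_mem
        exact ⟨hw₁lt, le_refl 1⟩
      have ht1 : Tendsto (deriv (deriv Φ)) (𝓝[<] (1:ℝ)) (𝓝 (deriv (deriv Φ) 1)) :=
        (hcont2.tendsto 1).mono_left nhdsWithin_le_nhds
      have ht2 : Tendsto (deriv (deriv Φ)) (𝓝[<] (1:ℝ)) (𝓝 0) := by
        apply Tendsto.congr' _ tendsto_const_nhds
        filter_upwards [hmemIio] with x hx
        exact (hD2zero x hx).symm
      have := tendsto_nhds_unique ht1 ht2
      linarith
  -- contradiction via the equation at φ₁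
  set η := (1 - g φ₁)/2 with hη
  have hηpos : 0 < η := by rw [hη]; linarith
  obtain ⟨r', hr'pos, hr'⟩ := Metric.continuousAt_iff.1 hgcont.continuousAt η hηpos
  set r := min (r'/2) (1/2) with hr
  have hrpos : 0 < r := by rw [hr]; positivity
  have hrhalf : r ≤ 1/2 := min_le_right _ _
  have hgsmall : ∀ s, φ₁ - r ≤ s → s ≤ φ₁ + r → g s ≤ 1 - η := by
    intro s h1 h2
    have hds : dist s φ₁ < r' := by
      have hrr : r ≤ r'/2 := min_le_left _ _
      have habs : |s - φ₁| ≤ r := abs_le.2 ⟨by linarith, by linarith⟩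
      rw [Real.dist_eq]
      linarith
    have := hr' hds
    rw [Real.dist_eq] at this
    have habs : |g s - g φ₁| < η := this
    have := abs_lt.1 habs
    rw [hη]; rw [hη] at this
    linarith [this.1, this.2]
  have hsplit : W φ₁ = (∫ s in (φ₁ - 1/2)..(φ₁ - r), g s)
      + ((∫ s in (φ₁ - r)..(φ₁ + r), g s) + ∫ s in (φ₁ + r)..(φ₁ + 1/2), g s) := by
    rw [hWeq φ₁]
    rw [intervalIntegral.integral_add_adjacent_intervals (hgint _ _) (hgint _ _),
      intervalIntegral.integral_add_adjacent_intervals (hgint _ _) (hgint _ _)]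
    rfl
  have hb1 : (∫ s in (φ₁ - 1/2)..(φ₁ - r), g s) ≤ (1/2 - r) := by
    have := intervalIntegral.integral_mono_on (by linarith : φ₁ - 1/2 ≤ φ₁ - r)
      (hgint _ _) intervalIntegrable_const (fun x _ => hgle1 x)
    rw [intervalIntegral.integral_const, smul_eq_mul] at this
    calc (∫ s in (φ₁ - 1/2)..(φ₁ - r), g s) ≤ (φ₁ - r - (φ₁ - 1/2)) * 1 := this
      _ = 1/2 - r := by ring
  have hb3 : (∫ s in (φ₁ + r)..(φ₁ + 1/2), g s) ≤ (1/2 - r) := by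
    have := intervalIntegral.integral_mono_on (by linarith : φ₁ + r ≤ φ₁ + 1/2)
      (hgint _ _) intervalIntegrable_const (fun x _ => hgle1 x)
    rw [intervalIntegral.integral_const, smul_eq_mul] at this
    calc (∫ s in (φ₁ + r)..(φ₁ + 1/2), g s) ≤ (φ₁ + 1/2 - (φ₁ + r)) * 1 := this
      _ = 1/2 - r := by ring
  have hb2 : (∫ s in (φ₁ - r)..(φ₁ + r), g s) ≤ 2*r*(1-η) := by
    have := intervalIntegral.integral_mono_on (by linarith : φ₁ - r ≤ φ₁ + r)
      (hgint _ _) intervalIntegrable_const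
      (fun x hx => hgsmall x hx.1 hx.2)
    rw [intervalIntegral.integral_const, smul_eq_mul] at this
    calc (∫ s in (φ₁ - r)..(φ₁ + r), g s) ≤ (φ₁ + r - (φ₁ - r)) * (1-η) := this
      _ = 2*r*(1-η) := by ring
  rw [hWφ₁] at hsplit
  nlinarith [hsplit, hb1, hb2, hb3, hrpos, hηpos]


set_option maxHeartbeats 2000000 in
theorem front_exponential_decay
    (Φ : ℝ → ℝ) (hΦ : ContDiff ℝ 2 Φ)
    (hN1 : deriv Φ (-1) = -1) (hN2 : deriv Φ 1 = 1)
    (hC : ∀ w ∈ Set.Icc (-1 : ℝ) 1, 0 ≤ deriv (deriv Φ) w)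
    (hE : Φ (-1) = Φ 1)
    (hS1 : deriv (deriv Φ) (-1) < 1) (hS2 : deriv (deriv Φ) 1 < 1)
    (hA : ∀ w ∈ Set.Ioo (-1 : ℝ) 1, 0 < Φ (-1) - Φ w + w ^ 2 / 2 - 1 / 2)
    (hpos : 0 < deriv (deriv Φ) 1)
    (W : ℝ → ℝ) (hWmono : Monotone W)
    (hWeq : ∀ φ, W φ = avg (fun s => deriv Φ (avg W s)) φ)
    (hWl2 : MemLp (fun φ => Wsh φ - W φ) 2 (volume : Measure ℝ))
    (hWbot : Tendsto W atBot (𝓝 (-1 : ℝ))) (hWtop : Tendsto W atTop (𝓝 (1 : ℝ)))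
    (τp : ℝ) (hτp : 0 < τp ∧ τp ^ 2 = 2 * deriv (deriv Φ) 1 * (Real.cosh τp - 1)) :
    ∀ τlow τup : ℝ, 0 < τlow → τlow < τp → τp < τup →
      ∃ clow > (0 : ℝ), ∃ cup > (0 : ℝ), ∀ φ : ℝ, 0 ≤ φ →
        clow * Real.exp (-τup * φ) ≤ 1 - W φ ∧
        1 - W φ ≤ cup * Real.exp (-τlow * φ) := by
  intro τlow τup hτlowpos hτlowlt hτupgt
  obtain ⟨hτppos, hτpeq⟩ := hτp
  have hτpne : τp ≠ 0 := ne_of_gt hτppos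
  -- regularity of Φ
  have hΦ' : ContDiff ℝ ((1:ℕ∞)+1) Φ := by apply hΦ.of_le; norm_num
  have h1 := (contDiff_succ_iff_deriv).mp hΦ'
  have hcd1 : ContDiff ℝ ((0:ℕ∞)+1) (deriv Φ) := by apply h1.2.2.of_le; norm_num
  have h2 := (contDiff_succ_iff_deriv).mp hcd1
  have hdiff2 : Differentiable ℝ (deriv Φ) := h2.1
  have hcont2 : Continuous (deriv (deriv Φ)) := h2.2.2.continuous
  have hd2 : ∀ x, HasDerivAt (deriv Φ) (deriv (deriv Φ) x) x := fun x => (hdiff2 x).hasDerivAt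
  have hd1cont : Continuous (deriv Φ) :=
    continuous_iff_continuousAt.2 fun x => (hd2 x).continuousAt
  -- bounds on W
  have hWle1 : ∀ φ, W φ ≤ 1 := fun φ =>
    ge_of_tendsto hWtop (eventually_atTop.2 ⟨φ, fun b hb => hWmono hb⟩)
  have hWge : ∀ φ, -1 ≤ W φ := fun φ =>
    le_of_tendsto hWbot (eventually_atBot.2 ⟨φ, fun b hb => hWmono hb⟩)
  have hWint : ∀ a b, IntervalIntegrable W volume a b := fun a b => hWmono.intervalIntegrable
  have hAWb : ∀ s, -1 ≤ avg W s ∧ avg W s ≤ 1 := fun s =>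
    ⟨le_trans (hWge _) (monotone_avg_bounds hWmono s).1,
     le_trans (monotone_avg_bounds hWmono s).2 (hWle1 _)⟩
  have hAWcont : Continuous (avg W) := avg_continuous hWint
  set g : ℝ → ℝ := fun s => deriv Φ (avg W s) with hgdef
  have hgcont : Continuous g := hd1cont.comp hAWcont
  have hgint : ∀ a b, IntervalIntegrable g volume a b := fun a b => hgcont.intervalIntegrable a b
  have hWcont : Continuous W := by
    have hWfun : W = fun φ => avg g φ := funext hWeq
    rw [hWfun]
    exact avg_continuous hgint
  have hWlt1 : ∀ φ, W φ < 1 :=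
    W_lt_one hd2 hcont2 hN2 hC hpos hWmono hWeq hWbot hWle1 hWge hWcont hAWb hAWcont
  -- V
  set V : ℝ → ℝ := fun φ => 1 - W φ with hVdef
  have hVcont : Continuous V := continuous_const.sub hWcont
  have hV0 : ∀ φ, 0 ≤ V φ := fun φ => by simp only [hVdef]; linarith [hWle1 φ]
  have hV2 : ∀ φ, V φ ≤ 2 := fun φ => by simp only [hVdef]; linarith [hWge φ]
  have hVpos : ∀ φ, 0 < V φ := fun φ => by simp only [hVdef]; linarith [hWlt1 φ]
  have hVanti : Antitone V := fun a b hab => by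
    simp only [hVdef]; linarith [hWmono hab]
  have hVint : ∀ a b, IntervalIntegrable V volume a b := fun a b => hVcont.intervalIntegrable a b
  have hAVcont : Continuous (avg V) := avg_continuous hVint
  have hAV : ∀ s, avg V s = 1 - avg W s := by
    intro s
    have h := avg_sub (f := fun _ : ℝ => (1:ℝ)) (g := W)
      (fun a b => intervalIntegrable_const) hWint s
    rw [avg_const] at h
    exact h
  have hVeq : ∀ φ, V φ = avg (fun s => 1 - g s) φ := by
    intro φ
    have h := avg_sub (f := fun _ : ℝ => (1:ℝ)) (g := g)
      (fun a b => intervalIntegrable_const) hgint φ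
    rw [avg_const] at h
    have : V φ = 1 - avg g φ := by simp only [hVdef]; rw [hWeq φ]
    rw [this, ← h]
  -- eigenvalue identity at τp
  have hcoshs : Real.cosh τp - 1 = 2 * Real.sinh (τp/2)^2 := by
    have h := Real.cosh_two_mul (τp/2)
    rw [show 2*(τp/2) = τp by ring] at h
    rw [h, Real.cosh_sq]
    ring
  have hbet2 : bet τp^2 * τp^2 = 4 * Real.sinh (τp/2)^2 := by
    rw [bet_eq]
    field_simp
    ring
  have h5 : τp^2 = 4 * (deriv (deriv Φ) 1) * Real.sinh (τp/2)^2 := by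
    rw [hτpeq, hcoshs]; ring
  have hbetp : deriv (deriv Φ) 1 * bet τp^2 = 1 := by
    have hcancel : deriv (deriv Φ) 1 * bet τp^2 * τp^2 = 1 * τp^2 := by
      linear_combination (deriv (deriv Φ) 1) * hbet2 - h5
    exact mul_right_cancel₀ (pow_ne_zero 2 hτpne) hcancel
  -- parameters
  set τmid := (τp + τup)/2 with hτmiddef
  have hτmid1 : τp < τmid := by rw [hτmiddef]; linarith
  have hτmid2 : τmid < τup := by rw [hτmiddef]; linarith
  have hτmidpos : 0 < τmid := by linarith
  have hbetlowlt : bet τlow < bet τp := bet_strict_mono hτlowpos hτlowlt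
  have hbetmidgt : bet τp < bet τmid := bet_strict_mono hτppos hτmid1
  have hblpos : 0 < bet τlow := bet_pos hτlowpos
  have hbppos : 0 < bet τp := bet_pos hτppos
  have hbmpos : 0 < bet τmid := bet_pos hτmidpos
  have hbetlow : deriv (deriv Φ) 1 * bet τlow^2 < 1 := by
    nlinarith only [hbetlowlt, hblpos, hbppos, hpos, hbetp]
  have hbetmid : 1 < deriv (deriv Φ) 1 * bet τmid^2 := by
    nlinarith only [hbetmidgt, hbmpos, hbppos, hpos, hbetp]
  set εa := (1 - deriv (deriv Φ) 1 * bet τlow^2)/(2 * bet τlow^2) with hεadef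
  have hεapos : 0 < εa := div_pos (by linarith) (by positivity)
  set κu := deriv (deriv Φ) 1 + εa with hκudef
  set θ := (1 + deriv (deriv Φ) 1 * bet τlow^2)/2 with hθdef
  have hθlt : θ < 1 := by rw [hθdef]; linarith
  have hεabet : εa * bet τlow^2 = (1 - deriv (deriv Φ) 1 * bet τlow^2)/2 := by
    rw [hεadef]
    field_simp
  have hκuθ : κu * bet τlow^2 ≤ θ := by
    have hex : κu * bet τlow^2 = deriv (deriv Φ) 1 * bet τlow^2 + εa * bet τlow^2 := by
      rw [hκudef]; ring
    rw [hex, hεabet, hθdef]; linarith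
  have hκupos : 0 < κu := by rw [hκudef]; linarith
  set εb := min (deriv (deriv Φ) 1/2) ((deriv (deriv Φ) 1 * bet τmid^2 - 1)/(bet τmid^2)) with hεbdef
  have hεbpos : 0 < εb := lt_min (by linarith) (div_pos (by linarith) (by positivity))
  set κl := deriv (deriv Φ) 1 - εb with hκldef
  have hεbhalf : εb ≤ deriv (deriv Φ) 1/2 := min_le_left _ _
  have hκlpos : 0 < κl := by rw [hκldef]; linarith
  have hκllt1 : κl < 1 := by rw [hκldef]; linarith
  have hκlbet : 1 ≤ κl * bet τmid^2 := by
    have h8 : εb ≤ (deriv (deriv Φ) 1 * bet τmid^2 - 1)/(bet τmid^2) := min_le_right _ _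
    have h9 : εb * bet τmid^2 ≤ deriv (deriv Φ) 1 * bet τmid^2 - 1 := by
      rw [← le_div_iff₀ (by positivity : (0:ℝ) < bet τmid^2)]
      exact h8
    have hex : κl * bet τmid^2 = deriv (deriv Φ) 1 * bet τmid^2 - εb * bet τmid^2 := by
      rw [hκldef]; ring
    rw [hex]; linarith
  set εm := min εa εb with hεmdef
  have hεmpos : 0 < εm := lt_min hεapos hεbpos
  obtain ⟨δ, hδpos, hδ⟩ := Metric.continuousAt_iff.1 hcont2.continuousAt εm hεmpos
  set δ'' := δ/2 with hδ''def
  have hδ''pos : 0 < δ'' := by rw [hδ''def]; linarith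
  have hbnd : ∀ u ∈ Set.Icc (1-δ'') 1, κl ≤ deriv (deriv Φ) u ∧ deriv (deriv Φ) u ≤ κu := by
    intro u hu
    have hdist : dist u 1 < δ := by
      rw [Real.dist_eq]
      have : |u - 1| ≤ δ'' := abs_le.2 ⟨by linarith [hu.1], by linarith [hu.2]⟩
      rw [hδ''def] at this
      linarith
    have := hδ hdist
    rw [Real.dist_eq] at this
    have habs := abs_lt.1 this
    have hma : εm ≤ εa := min_le_left _ _
    have hmb : εm ≤ εb := min_le_right _ _
    constructor
    · rw [hκldef]; linarith [habs.1]
    · rw [hκudef]; linarith [habs.2]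
  have hMVT := deriv_bounds hd2 hcont2 hN2 hbnd
  -- choice of R
  obtain ⟨R₀, hR₀⟩ := eventually_atTop.1 (hWtop (Ioi_mem_nhds (show (1:ℝ) - δ'' < 1 by linarith)))
  set R := max (R₀ + 1) 1 with hRdef
  have hR1 : (1:ℝ) ≤ R := le_max_right _ _
  have hRW : ∀ s, R - 1 ≤ s → 1 - δ'' ≤ W s := by
    intro s hs
    have hR₀le : R₀ + 1 ≤ R := le_max_left _ _
    have : R₀ ≤ s := by linarith
    exact le_of_lt (hR₀ s this)
  -- the two-sided linear relation
  have hptwise : ∀ φ, R ≤ φ → ∀ s ∈ Set.Icc (φ-1/2) (φ+1/2),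
      κl * avg V s ≤ 1 - g s ∧ 1 - g s ≤ κu * avg V s := by
    intro φ hφ s hs
    have h1 : 1 - δ'' ≤ avg W s := by
      have := hRW (s-1/2) (by simp only [Set.mem_Icc] at hs; linarith [hs.1])
      linarith [(monotone_avg_bounds hWmono s).1]
    have h2 : avg W s ≤ 1 := (hAWb s).2
    have h3 := hMVT (avg W s) h1 h2
    rw [hAV s]
    exact h3
  have hrelL : ∀ φ, R ≤ φ → κl * avg (avg V) φ ≤ V φ := by
    intro φ hφ
    have hL := avg_mono_on (f := fun s => κl * avg V s) (g := fun s => 1 - g s)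
      ((continuous_const.mul hAVcont).intervalIntegrable _ _)
      ((continuous_const.sub hgcont).intervalIntegrable _ _)
      (fun s hs => (hptwise φ hφ s hs).1)
    rw [avg_const_mul] at hL
    rw [hVeq φ]
    exact hL
  have hrelU : ∀ φ, R ≤ φ → V φ ≤ κu * avg (avg V) φ := by
    intro φ hφ
    have hU := avg_mono_on (f := fun s => 1 - g s) (g := fun s => κu * avg V s)
      ((continuous_const.sub hgcont).intervalIntegrable _ _)
      ((continuous_const.mul hAVcont).intervalIntegrable _ _)
      (fun s hs => (hptwise φ hφ s hs).2)
    rw [avg_const_mul] at hU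
    rw [hVeq φ]
    exact hU
  -- apply the comparison lemmas
  have hUP := upper_comparison hVcont hV0 hV2 hκupos hτlowpos hθlt hκuθ hrelU
  have hLO := lower_comparison hVcont hV0 hVanti hκlpos hκllt1 hτmidpos hκlbet hrelL
  -- constants
  set η := τup - τmid with hηdef
  have hηpos : 0 < η := by rw [hηdef]; linarith
  have hVRpos : 0 < V R := hVpos R
  have hVR1pos : 0 < V (R+1) := hVpos (R+1)
  set K1 := V R * Real.exp (τmid*(R-1)) with hK1def
  have hK1pos : 0 < K1 := mul_pos hVRpos (Real.exp_pos _)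
  set clow := min (V (R+1)) (K1 * min η 1) with hclowdef
  have hminη : 0 < min η 1 := lt_min hηpos one_pos
  have hclowpos : 0 < clow := lt_min hVR1pos (mul_pos hK1pos hminη)
  set cup := 2 * Real.exp (τlow * R) with hcupdef
  have hcuppos : 0 < cup := by rw [hcupdef]; positivity
  refine ⟨clow, hclowpos, cup, hcuppos, ?_⟩
  intro φ hφ0
  constructor
  · -- lower bound
    show clow * Real.exp (-τup * φ) ≤ V φ
    rcases le_total φ (R+1) with hc | hc
    · have he1 : Real.exp (-τup * φ) ≤ 1 := by
        rw [show (1:ℝ) = Real.exp 0 by simp]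
        apply Real.exp_le_exp.2
        have : 0 ≤ τup * φ := mul_nonneg (by linarith) hφ0
        linarith
      calc clow * Real.exp (-τup * φ) ≤ clow * 1 :=
            mul_le_mul_of_nonneg_left he1 (le_of_lt hclowpos)
        _ = clow := mul_one _
        _ ≤ V (R+1) := min_le_left _ _
        _ ≤ V φ := hVanti hc
    · have hlow := hLO φ hc
      have hD : (0:ℝ) < φ - R + 2 := by linarith
      have he1 : Real.exp (-(τmid*φ)) = Real.exp (η*φ) * Real.exp (-(τup*φ)) := by
        rw [← Real.exp_add]
        congr 1
        rw [hηdef]; ring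
      have hm1 : min η 1 * (φ - R + 2) ≤ η*φ + 1 := by
        rcases le_total η 1 with h | h
        · rw [min_eq_left h]
          nlinarith only [h, hηpos, hR1, hφ0, hc]
        · rw [min_eq_right h]
          nlinarith only [h, hηpos, hR1, hφ0, hc]
      have hm2 : η*φ + 1 ≤ Real.exp (η*φ) := by
        have := Real.add_one_le_exp (η*φ)
        linarith
      have hkey : (K1 * min η 1) * (φ - R + 2) ≤ K1 * Real.exp (η*φ) := by
        have := mul_le_mul_of_nonneg_left (le_trans hm1 hm2) (le_of_lt hK1pos)
        nlinarith only [this]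
      have hstep : K1 * min η 1 ≤ K1 * Real.exp (η*φ) / (φ - R + 2) :=
        (le_div_iff₀ hD).2 hkey
      have hchain : clow * Real.exp (-τup * φ)
          ≤ (K1 / (φ - R + 2)) * Real.exp (-(τmid*φ)) := by
        have e2 : -τup * φ = -(τup*φ) := by ring
        rw [e2, he1]
        calc clow * Real.exp (-(τup*φ))
            ≤ (K1 * min η 1) * Real.exp (-(τup*φ)) := by
              apply mul_le_mul_of_nonneg_right (min_le_right _ _) (le_of_lt (Real.exp_pos _))
          _ ≤ (K1 * Real.exp (η*φ) / (φ - R + 2)) * Real.exp (-(τup*φ)) := by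
              apply mul_le_mul_of_nonneg_right hstep (le_of_lt (Real.exp_pos _))
          _ = (K1 / (φ - R + 2)) * (Real.exp (η*φ) * Real.exp (-(τup*φ))) := by ring
      calc clow * Real.exp (-τup * φ) ≤ (K1 / (φ - R + 2)) * Real.exp (-(τmid*φ)) := hchain
        _ = V R * Real.exp (τmid*(R-1)) / (φ - R + 2) * Real.exp (-(τmid*φ)) := by rw [hK1def]
        _ ≤ V φ := hlow
  · -- upper bound
    show V φ ≤ cup * Real.exp (-τlow * φ)
    have e2 : -τlow * φ = -(τlow*φ) := by ring
    rw [e2]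
    rcases le_total R φ with hc | hc
    · have := hUP φ hc
      calc V φ ≤ 2 * Real.exp (τlow * R) * Real.exp (-(τlow * φ)) := this
        _ = cup * Real.exp (-(τlow*φ)) := by rw [hcupdef]
    · have h2 : V φ ≤ 2 := hV2 φ
      have h1 : (1:ℝ) ≤ Real.exp (τlow*R) * Real.exp (-(τlow*φ)) := by
        rw [← Real.exp_add]
        rw [show (1:ℝ) = Real.exp 0 by simp]
        apply Real.exp_le_exp.2
        have := mul_nonneg (le_of_lt hτlowpos) (sub_nonneg.2 hc)
        nlinarith only [this]
      have : (2:ℝ) ≤ cup * Real.exp (-(τlow*φ)) := by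
        rw [hcupdef]
        nlinarith only [h1, Real.exp_pos (τlow*R), Real.exp_pos (-(τlow*φ))]
      linarith
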